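/- Monopoly equilibrium without price differentiation (Theorem 4): Consider the two-AP linear market with cross-interference coefficients a, b > 0 satisfying a + b < 2 and inverse demand u(x) = w − s·x, w, s > 0. Then the common price t = w/2 is the unique maximizer over t ∈ [0,∞) of the total profit t·(x_1^WE(t,t) + x_2^WE(t,t)). Moreover, if additionally a ≤ 1 and b ≤ 1, the resulting Wardrop equilibrium is x^WE(w/2, w/2) = (1/2)·M^{-1}(w·𝟏), where M = [[1+s, a+s],[b+s, 1+s]]. -/

import Mathlib

open Matrix

/-- A flow vector `x ∈ [0,∞)²` is a Wardrop equilibrium of the two-AP linear market with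
cross-interference coefficients `a, b`, inverse demand `u x = w - s x`, and prices
`p = (p₁, p₂)`. -/
def IsLinWE (a b w s : ℝ) (p x : ℝ × ℝ) : Prop :=
  0 ≤ x.1 ∧ 0 ≤ x.2 ∧
  (0 < x.1 → p.1 + (x.1 + a * x.2) = w - s * (x.1 + x.2)) ∧
  (x.1 = 0 → w - s * (x.1 + x.2) ≤ p.1 + (x.1 + a * x.2)) ∧
  (0 < x.2 → p.2 + (b * x.1 + x.2) = w - s * (x.1 + x.2)) ∧
  (x.2 = 0 → w - s * (x.1 + x.2) ≤ p.2 + (b * x.1 + x.2))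

/-!
With `M` the matrix of the theorem, a Wardrop equilibrium at prices `p` is a solution of the
linear complementarity problem `LCP(M, p - w𝟏)`. As `a + b < 2`, the quadratic form of `M` is
positive definite, and the monotonicity argument makes that solution unique. At a common price
`t < w` the vector `(t - w)𝟏` is `1 - t/w` times `-w𝟏`, and for `t ≥ w` it is nonnegative, so the
equilibrium is `max (1 - t/w) 0` times the one at price `0`: the profit is a positive constant
times `t · max (1 - t/w) 0`, uniquely maximal at `t = w/2`. For `a, b ≤ 1` the vector
`(1/2) M⁻¹ (w𝟏) = w / (2 det M) · (1 - a, 1 - b)` is nonnegative and makes every cost margin vanish,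
so it is the equilibrium at `w/2`.
-/

def IsLCPSolution {n : Type*} [Fintype n] (M : Matrix n n ℝ) (q x : n → ℝ) : Prop :=
  0 ≤ x ∧ 0 ≤ M *ᵥ x + q ∧ x ⬝ᵥ (M *ᵥ x + q) = 0

namespace IsLCPSolution

variable {n : Type*} [Fintype n] {M : Matrix n n ℝ} {q x y : n → ℝ}

theorem zero (hq : 0 ≤ q) : IsLCPSolution M q 0 := by
  refine ⟨le_rfl, ?_, ?_⟩ <;> simp [hq]

theorem of_mulVec_add_eq_zero (hx : 0 ≤ x) (h : M *ᵥ x + q = 0) : IsLCPSolution M q x :=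
  ⟨hx, h.ge, by rw [h, dotProduct_zero]⟩

theorem smul (hx : IsLCPSolution M q x) {c : ℝ} (hc : 0 ≤ c) :
    IsLCPSolution M (c • q) (c • x) := by
  obtain ⟨hx0, hF, hcompl⟩ := hx
  have hFc : M *ᵥ (c • x) + c • q = c • (M *ᵥ x + q) := by
    rw [mulVec_smul, smul_add]
  refine ⟨smul_nonneg hc hx0, ?_, ?_⟩ <;> rw [hFc]
  · exact smul_nonneg hc hF
  · rw [smul_dotProduct, dotProduct_smul, hcompl, smul_zero, smul_zero]

theorem unique (hM : ∀ z ≠ 0, 0 < z ⬝ᵥ M *ᵥ z) (hx : IsLCPSolution M q x)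
    (hy : IsLCPSolution M q y) : x = y := by
  obtain ⟨hx0, hFx, hcx⟩ := hx
  obtain ⟨hy0, hFy, hcy⟩ := hy
  have hsplit : (x - y) ⬝ᵥ M *ᵥ (x - y) =
      x ⬝ᵥ (M *ᵥ x + q) + y ⬝ᵥ (M *ᵥ y + q) - x ⬝ᵥ (M *ᵥ y + q) - y ⬝ᵥ (M *ᵥ x + q) := by
    simp only [mulVec_sub, sub_dotProduct, dotProduct_sub, dotProduct_add]
    ring
  have hle : (x - y) ⬝ᵥ M *ᵥ (x - y) ≤ 0 := by
    rw [hsplit, hcx, hcy]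
    linarith [dotProduct_nonneg_of_nonneg hx0 hFy, dotProduct_nonneg_of_nonneg hy0 hFx]
  by_contra hne
  exact hle.not_gt (hM _ (sub_ne_zero.mpr hne))

end IsLCPSolution

theorem nonneg_and_mul_eq_zero_of_complementary {x c : ℝ} (hx : 0 ≤ x) (hpos : 0 < x → c = 0)
    (hzero : x = 0 → 0 ≤ c) : 0 ≤ c ∧ x * c = 0 := by
  rcases hx.eq_or_lt with rfl | hx
  · exact ⟨hzero rfl, zero_mul c⟩
  · rw [hpos hx]
    exact ⟨le_rfl, mul_zero x⟩

section Market

variable {a b w s : ℝ}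

def marketMatrix (a b s : ℝ) : Matrix (Fin 2) (Fin 2) ℝ := !![1 + s, a + s; b + s, 1 + s]

theorem marketMatrix_quadForm_pos (ha : 0 ≤ a) (hb : 0 ≤ b) (hab : a + b < 2) (hs : 0 ≤ s)
    {z : Fin 2 → ℝ} (hz : z ≠ 0) : 0 < z ⬝ᵥ marketMatrix a b s *ᵥ z := by
  have hz' : z 0 ≠ 0 ∨ z 1 ≠ 0 := by
    by_contra! h
    exact hz (funext (Fin.forall_fin_two.mpr h))
  have hsq : 0 < z 0 ^ 2 + z 1 ^ 2 := by
    rcases hz' with h | h <;> positivity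
  have hform : z ⬝ᵥ marketMatrix a b s *ᵥ z =
      (2 - a - b) / 2 * (z 0 ^ 2 + z 1 ^ 2) + (a + b + 2 * s) / 2 * (z 0 + z 1) ^ 2 := by
    simp [marketMatrix, dotProduct, mulVec, Fin.sum_univ_two]
    ring
  rw [hform]
  have : 0 ≤ (a + b + 2 * s) / 2 * (z 0 + z 1) ^ 2 := by positivity
  have : 0 < (2 - a - b) / 2 * (z 0 ^ 2 + z 1 ^ 2) := mul_pos (by linarith) hsq
  linarith

theorem marketMatrix_det : (marketMatrix a b s).det = 1 + s * (2 - a - b) - a * b := by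
  rw [marketMatrix, det_fin_two_of]
  ring

theorem IsLinWE.isLCPSolution {p x : ℝ × ℝ} (h : IsLinWE a b w s p x) :
    IsLCPSolution (marketMatrix a b s) ![p.1 - w, p.2 - w] ![x.1, x.2] := by
  obtain ⟨hx1, hx2, hpos1, hzero1, hpos2, hzero2⟩ := h
  obtain ⟨hF1, hc1⟩ := nonneg_and_mul_eq_zero_of_complementary hx1
    (fun h => sub_eq_zero.mpr (hpos1 h)) (fun h => sub_nonneg.mpr (hzero1 h))
  obtain ⟨hF2, hc2⟩ := nonneg_and_mul_eq_zero_of_complementary hx2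
    (fun h => sub_eq_zero.mpr (hpos2 h)) (fun h => sub_nonneg.mpr (hzero2 h))
  have hF : marketMatrix a b s *ᵥ ![x.1, x.2] + ![p.1 - w, p.2 - w] =
      ![p.1 + (x.1 + a * x.2) - (w - s * (x.1 + x.2)),
        p.2 + (b * x.1 + x.2) - (w - s * (x.1 + x.2))] := by
    ext i; fin_cases i <;> simp [marketMatrix] <;> ring
  refine ⟨?_, ?_, ?_⟩
  · simp [Pi.le_def, Fin.forall_fin_two, hx1, hx2]
  · rw [hF]; simp [Pi.le_def, Fin.forall_fin_two, hF1, hF2]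
  · rw [hF]; simp [dotProduct, Fin.sum_univ_two, hc1, hc2]

theorem IsLinWE.vec_eq (ha : 0 ≤ a) (hb : 0 ≤ b) (hab : a + b < 2) (hs : 0 ≤ s)
    {p x : ℝ × ℝ} {v : Fin 2 → ℝ} (hx : IsLinWE a b w s p x)
    (hv : IsLCPSolution (marketMatrix a b s) ![p.1 - w, p.2 - w] v) : ![x.1, x.2] = v :=
  hx.isLCPSolution.unique (fun _ => marketMatrix_quadForm_pos ha hb hab hs) hv

theorem IsLinWE.add_pos {p x : ℝ × ℝ} (hw : p.1 < w) (hx : IsLinWE a b w s p x) :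
    0 < x.1 + x.2 := by
  obtain ⟨hx1, hx2, -, hzero1, -, -⟩ := hx
  by_contra! h
  have h1 : x.1 = 0 := by linarith
  have h2 : x.2 = 0 := by linarith
  have := hzero1 h1
  simp only [h1, h2] at this
  linarith

theorem IsLinWE.add_eq_max_mul (ha : 0 ≤ a) (hb : 0 ≤ b) (hab : a + b < 2) (hs : 0 ≤ s)
    (hw : 0 < w) {t : ℝ} {x x₀ : ℝ × ℝ} (hx : IsLinWE a b w s (t, t) x)
    (hx₀ : IsLinWE a b w s (0, 0) x₀) : x.1 + x.2 = max (1 - t / w) 0 * (x₀.1 + x₀.2) := by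
  suffices hvec : ![x.1, x.2] = max (1 - t / w) 0 • ![x₀.1, x₀.2] by
    have h0 := congrFun hvec 0
    have h1 := congrFun hvec 1
    simp only [Matrix.cons_val_zero, Matrix.cons_val_one, Pi.smul_apply, smul_eq_mul] at h0 h1
    rw [h0, h1, mul_add]
  refine hx.vec_eq ha hb hab hs ?_
  change IsLCPSolution _ ![t - w, t - w] _
  rcases lt_or_ge t w with htw | htw
  · have hq : ![t - w, t - w] = (1 - t / w) • ![0 - w, 0 - w] := by
      ext i; fin_cases i <;> simp <;> field_simp <;> ring
    rw [max_eq_left (by rw [sub_nonneg, div_le_one hw]; exact htw.le), hq]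
    exact hx₀.isLCPSolution.smul (by rw [sub_nonneg, div_le_one hw]; exact htw.le)
  · rw [max_eq_right (by rw [sub_nonpos, one_le_div hw]; exact htw), zero_smul]
    exact IsLCPSolution.zero (by simp [Pi.le_def, Fin.forall_fin_two, htw])

theorem mul_max_one_sub_div_lt {t w : ℝ} (hw : 0 < w) (ht : t ≠ w / 2) :
    t * max (1 - t / w) 0 < w / 4 := by
  rcases lt_or_ge t w with htw | htw
  · rw [max_eq_left (by rw [sub_nonneg, div_le_one hw]; exact htw.le)]
    have hsq : 0 < (t - w / 2) ^ 2 / w := by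
      have := sub_ne_zero.mpr ht
      positivity
    have : w / 4 - t * (1 - t / w) = (t - w / 2) ^ 2 / w := by field_simp; ring
    linarith
  · rw [max_eq_right (by rw [sub_nonpos, one_le_div hw]; exact htw), mul_zero]
    positivity

theorem marketMatrix_det_pos (ha : 0 ≤ a) (ha₁ : a ≤ 1) (hb₁ : b ≤ 1) (hab : a + b < 2)
    (hs : 0 < s) : 0 < (marketMatrix a b s).det := by
  rw [marketMatrix_det]
  nlinarith [mul_pos hs (show 0 < 2 - a - b by linarith), mul_le_mul ha₁ hb₁]

theorem marketMatrix_inv_mulVec_const_nonneg (ha₁ : a ≤ 1) (hb₁ : b ≤ 1)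
    (hdet : 0 < (marketMatrix a b s).det) {c : ℝ} (hc : 0 ≤ c) :
    0 ≤ (marketMatrix a b s)⁻¹ *ᵥ fun _ => c := by
  rw [inv_def, Ring.inverse_eq_inv', smul_mulVec, adjugate_fin_two]
  refine smul_nonneg (inv_nonneg.mpr hdet.le) ?_
  simp [Pi.le_def, Fin.forall_fin_two, marketMatrix, dotProduct, Fin.sum_univ_two]
  constructor <;> nlinarith

theorem isLCPSolution_half_inv_mulVec_const (ha₁ : a ≤ 1) (hb₁ : b ≤ 1)
    (hdet : 0 < (marketMatrix a b s).det) (hw : 0 ≤ w) :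
    IsLCPSolution (marketMatrix a b s) ![w / 2 - w, w / 2 - w]
      ((1 / 2 : ℝ) • (marketMatrix a b s)⁻¹ *ᵥ fun _ => w) := by
  refine .of_mulVec_add_eq_zero
    (smul_nonneg (by norm_num) (marketMatrix_inv_mulVec_const_nonneg ha₁ hb₁ hdet hw)) ?_
  rw [mulVec_smul, mulVec_mulVec, mul_nonsing_inv _ (isUnit_iff_ne_zero.mpr hdet.ne'),
    one_mulVec]
  ext i
  fin_cases i <;> simp <;> ring

end Market

/-- **Monopoly equilibrium without price differentiation (Theorem 4).**
The common price `t = w/2` is the unique maximizer over `t ∈ [0,∞)` of the total profit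
`t · (x₁^WE(t,t) + x₂^WE(t,t))`; moreover, if additionally `a ≤ 1` and `b ≤ 1`, the
resulting Wardrop equilibrium is `x^WE(w/2, w/2) = (1/2) · M⁻¹ (w·𝟏)`, where
`M = [[1+s, a+s],[b+s, 1+s]]`. -/
theorem monopoly_equilibrium_without_price_differentiation
    (a b w s : ℝ) (ha : 0 < a) (hb : 0 < b) (hab : a + b < 2)
    (hw : 0 < w) (hs : 0 < s)
    (xWE : ℝ × ℝ → ℝ × ℝ)
    (hxWE : ∀ p : ℝ × ℝ, 0 ≤ p.1 → 0 ≤ p.2 → IsLinWE a b w s p (xWE p))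
    (M : Matrix (Fin 2) (Fin 2) ℝ) (hMdef : M = !![1 + s, a + s; b + s, 1 + s]) :
    (∀ t : ℝ, 0 ≤ t → t ≠ w / 2 →
      t * ((xWE (t, t)).1 + (xWE (t, t)).2) <
        (w / 2) * ((xWE (w / 2, w / 2)).1 + (xWE (w / 2, w / 2)).2)) ∧
    (a ≤ 1 → b ≤ 1 →
      xWE (w / 2, w / 2) =
        (((1 / 2 : ℝ) • M⁻¹.mulVec (fun _ => w)) 0,
         ((1 / 2 : ℝ) • M⁻¹.mulVec (fun _ => w)) 1)) := by
  obtain rfl : M = marketMatrix a b s := hMdef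
  have hx₀ := hxWE (0, 0) le_rfl le_rfl
  have htotal : ∀ t, 0 ≤ t → (xWE (t, t)).1 + (xWE (t, t)).2 =
      max (1 - t / w) 0 * ((xWE (0, 0)).1 + (xWE (0, 0)).2) := fun t ht =>
    (hxWE (t, t) ht ht).add_eq_max_mul ha.le hb.le hab hs.le hw hx₀
  refine ⟨fun t ht hne => ?_, fun ha₁ hb₁ => ?_⟩
  · have hpeak : w / 2 * max (1 - w / 2 / w) 0 = w / 4 := by
      rw [max_eq_left (by rw [sub_nonneg, div_le_one hw]; linarith)]
      field_simp
      ring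
    rw [htotal t ht, htotal (w / 2) (by positivity), ← mul_assoc, ← mul_assoc, hpeak]
    exact mul_lt_mul_of_pos_right (mul_max_one_sub_div_lt hw hne) (hx₀.add_pos hw)
  · have hdet := marketMatrix_det_pos ha.le ha₁ hb₁ hab hs
    have hvec := (hxWE (w / 2, w / 2) (by positivity) (by positivity)).vec_eq ha.le hb.le hab
      hs.le (isLCPSolution_half_inv_mulVec_const ha₁ hb₁ hdet hw.le)
    exact Prod.ext (congrFun hvec 0) (congrFun hvec 1)
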